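/- arXiv:2205.12729 — 3 statements merged into one kernel-verified Lean document; each statement's English description precedes it below -/
import Mathlib

section
/- For the CDF-scale log-linear ensemble F̄ = exp(∑_m w_m log F_m) with derivative f̄(y) = exp(∑_m w_m log F_m(y)) · ∑_m w_m f_m(y)/F_m(y), one has −log f̄(y) ≤ −∑_m w_m log f_m(y) for every y. -/
/-!
The pooled density is `F̄ · ∑ w_m f_m / F_m` with `log F̄ = ∑ w_m log F_m`, so
`log f̄ = ∑ w_m log F_m + log ∑ w_m (f_m / F_m)`. Jensen's inequality for the concave logarithm
bounds the last term below by `∑ w_m log (f_m / F_m) = ∑ w_m log f_m - ∑ w_m log F_m`, and the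
`log F_m` terms cancel.
-/

open Real

theorem Real.sum_mul_log_le_log_sum_mul {ι : Type*} {s : Finset ι} {w z : ι → ℝ}
    (hw : ∀ i ∈ s, 0 ≤ w i) (hw1 : ∑ i ∈ s, w i = 1) (hz : ∀ i ∈ s, 0 < z i) :
    ∑ i ∈ s, w i * log (z i) ≤ log (∑ i ∈ s, w i * z i) := by
  simpa only [smul_eq_mul] using strictConcaveOn_log_Ioi.concaveOn.le_map_sum hw hw1 hz

theorem loglinear_cdf_pool_nll_general
    (M : ℕ) (F : Fin M → ℝ → ℝ)
    (w : Fin M → ℝ) (hw : ∀ m, 0 ≤ w m) (hw1 : ∑ m, w m = 1)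
    (y : ℝ) (hFpos : ∀ m, 0 < F m y) (hfpos : ∀ m, 0 < deriv (F m) y) :
    -Real.log (Real.exp (∑ m, w m * Real.log (F m y)) *
        ∑ m, w m * (deriv (F m) y / F m y)) ≤
      -∑ m, w m * Real.log (deriv (F m) y) := by
  have hratio : ∀ m ∈ Finset.univ, 0 < deriv (F m) y / F m y :=
    fun m _ => div_pos (hfpos m) (hFpos m)
  have hmean : 0 < ∑ m, w m * (deriv (F m) y / F m y) := by
    simpa only [smul_eq_mul, Set.mem_Ioi] using
      (convex_Ioi (0 : ℝ)).sum_mem (fun m _ => hw m) hw1 hratio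
  have hlog_deriv : ∀ m, log (deriv (F m) y) = log (F m y) + log (deriv (F m) y / F m y) :=
    fun m => by rw [log_div (hfpos m).ne' (hFpos m).ne']; ring
  rw [log_mul (exp_pos _).ne' hmean.ne', log_exp, neg_le_neg_iff]
  calc ∑ m, w m * log (deriv (F m) y)
      = ∑ m, w m * log (F m y) + ∑ m, w m * log (deriv (F m) y / F m y) := by
        simp only [hlog_deriv, mul_add, Finset.sum_add_distrib]
    _ ≤ ∑ m, w m * log (F m y) + log (∑ m, w m * (deriv (F m) y / F m y)) :=
        add_le_add_right (sum_mul_log_le_log_sum_mul (fun m _ => hw m) hw1 hratio) _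

/-- The CDF-scale log-linear ensemble has pointwise better-than-average
negative log-likelihood. -/
theorem loglinear_cdf_pool_nll
    (M : ℕ) (F : Fin M → ℝ → ℝ)
    (hdiff : ∀ m, Differentiable ℝ (F m))
    (hmono : ∀ m, StrictMono (F m))
    (w : Fin M → ℝ) (hw : ∀ m, 0 ≤ w m) (hw1 : ∑ m, w m = 1)
    (y : ℝ) (hFpos : ∀ m, 0 < F m y) (hfpos : ∀ m, 0 < deriv (F m) y) :
    -Real.log (Real.exp (∑ m, w m * Real.log (F m y)) *
        ∑ m, w m * (deriv (F m) y / F m y)) ≤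
      -∑ m, w m * Real.log (deriv (F m) y) :=
  loglinear_cdf_pool_nll_general M F w hw hw1 y hFpos hfpos
end

section
/- The logit-pooled probability p* = expit(∑_m w_m logit(p_m)) minimizes over p ∈ (0,1) the worst-case excess log-loss max_{y∈{0,1}} [NLL(p,y) − ∑_m w_m NLL(p_m,y)], where NLL(p,1) = −log p and NLL(p,0) = −log(1−p). -/
open Real

/-!
Writing `A = ∑ w log p` and `B = ∑ w log (1 - p)`, the pooled logit is `∑ w logit p = A - B`.
For any constants `A, B` the branch `-log q + A` decreases and `-log (1 - q) + B` increases in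
`q`, so their maximum is smallest where they cross; since `log (σ s) - log (1 - σ s) = s` for the
sigmoid `σ`, they cross exactly at `q = σ (A - B)`.
-/

lemma Real.log_sigmoid_neg (s : ℝ) : log (sigmoid (-s)) = log (sigmoid s) - s := by
  rw [← sigmoid_mul_rexp_neg, log_mul (sigmoid_pos s).ne' (exp_pos _).ne', log_exp]
  ring

lemma Real.max_neg_log_sigmoid_sub_le (a b : ℝ) {q : ℝ} (hq : q ∈ Set.Ioo 0 1) :
    max (-log (sigmoid (a - b)) + a) (-log (1 - sigmoid (a - b)) + b) ≤
      max (-log q + a) (-log (1 - q) + b) := by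
  set s := sigmoid (a - b)
  have hcross : -log (1 - s) + b = -log s + a := by
    rw [← sigmoid_neg, log_sigmoid_neg]
    ring
  rw [hcross, max_self]
  rcases le_total q s with h | h
  · exact le_max_of_le_left (by linarith [log_le_log hq.1 h])
  · refine le_max_of_le_right ?_
    have : log (1 - q) ≤ log (1 - s) := log_le_log (by linarith [hq.2]) (by linarith)
    linarith

lemma Finset.sum_mul_log_odds {ι : Type*} (s : Finset ι) (w p : ι → ℝ)
    (hp₀ : ∀ i ∈ s, p i ≠ 0) (hp₁ : ∀ i ∈ s, p i ≠ 1) :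
    ∑ i ∈ s, w i * log (p i / (1 - p i)) =
      ∑ i ∈ s, w i * log (p i) - ∑ i ∈ s, w i * log (1 - p i) := by
  rw [← Finset.sum_sub_distrib]
  refine Finset.sum_congr rfl fun i hi => ?_
  rw [log_div (hp₀ i hi) (sub_ne_zero.2 (hp₁ i hi).symm)]
  ring

theorem logit_pooling_minimax_log_score_general
    (M : ℕ) (p : Fin M → ℝ) (hp : ∀ m, p m ∈ Set.Ioo (0 : ℝ) 1)
    (w : Fin M → ℝ) :
    ∀ q ∈ Set.Ioo (0 : ℝ) 1,
      max (-Real.log (1 / (1 + Real.exp (-(∑ m, w m * Real.log (p m / (1 - p m))))))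
            + ∑ m, w m * Real.log (p m))
          (-Real.log (1 - 1 / (1 + Real.exp (-(∑ m, w m * Real.log (p m / (1 - p m))))))
            + ∑ m, w m * Real.log (1 - p m)) ≤
        max (-Real.log q + ∑ m, w m * Real.log (p m))
            (-Real.log (1 - q) + ∑ m, w m * Real.log (1 - p m)) := by
  intro q hq
  rw [Finset.sum_mul_log_odds _ w p (fun m _ => (hp m).1.ne') (fun m _ => (hp m).2.ne)]
  simpa only [one_div, ← sigmoid_def] using max_neg_log_sigmoid_sub_le _ _ hq

/-- Minimax optimality of logit pooling for the binary log-score: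
`p* = expit (∑ m, w m * logit (p m))` minimizes over `p ∈ (0,1)` the
worst-case excess log-loss over the two outcomes. -/
theorem logit_pooling_minimax_log_score
    (M : ℕ) (p : Fin M → ℝ) (hp : ∀ m, p m ∈ Set.Ioo (0 : ℝ) 1)
    (w : Fin M → ℝ) (hw : ∀ m, 0 ≤ w m) (hw1 : ∑ m, w m = 1) :
    ∀ q ∈ Set.Ioo (0 : ℝ) 1,
      max (-Real.log (1 / (1 + Real.exp (-(∑ m, w m * Real.log (p m / (1 - p m))))))
            + ∑ m, w m * Real.log (p m))
          (-Real.log (1 - 1 / (1 + Real.exp (-(∑ m, w m * Real.log (p m / (1 - p m))))))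
            + ∑ m, w m * Real.log (1 - p m)) ≤
        max (-Real.log q + ∑ m, w m * Real.log (p m))
            (-Real.log (1 - q) + ∑ m, w m * Real.log (1 - p m)) :=
  logit_pooling_minimax_log_score_general M p hp w
end

section
/- Linear pooling is minimax optimal for the ranked probability score: F̄ = ∑_m w_m F_m minimizes over candidate CDFs F the quantity max_k [RPS(F, y_k) − ∑_m w_m RPS(F_m, y_k)]. -/
/-!
Write `RPS(G, y_k) = c ‖G - e_k‖²` with `c = (K - 1)⁻¹` and `e_k = 𝟙(k ≤ ·)` the CDF of the point
mass at `y_k`. By the bias–variance identity, the excess score of the pool `F̄ = ∑ w_m F_m` is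
`-c ∑_l Var_w(F_m(y_l))` for every `k`. Since `F̄` is a CDF, it is the convex combination
`∑ λ_k e_k` with `λ_k = F̄(y_k) - F̄(y_{k-1}) ≥ 0`, and averaging `‖G - e_k‖² - ‖F̄ - e_k‖²` with
these weights gives `‖G - F̄‖² ≥ 0`. So the excess score of any `G` has a `λ`-average, hence a
maximum, at least that of the pool.
-/

open Finset

theorem sum_mul_sub_sq_eq {ι : Type*} (s : Finset ι) (w x : ι → ℝ) (a : ℝ)
    (hw : ∑ i ∈ s, w i = 1) :
    ∑ i ∈ s, w i * (x i - a) ^ 2 =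
      (∑ i ∈ s, w i * x i ^ 2 - (∑ i ∈ s, w i * x i) ^ 2) + (∑ i ∈ s, w i * x i - a) ^ 2 := by
  have expand : ∀ i, w i * (x i - a) ^ 2 = w i * x i ^ 2 - 2 * a * (w i * x i) + a ^ 2 * w i :=
    fun i => by ring
  rw [sum_congr rfl fun i _ => expand i, sum_add_distrib, sum_sub_distrib, ← mul_sum, ← mul_sum,
    hw]
  ring

theorem sum_mul_sub_sq_sub_sub_sq {ι : Type*} (s : Finset ι) (w x : ι → ℝ) (a : ℝ)
    (hw : ∑ i ∈ s, w i = 1) :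
    ∑ i ∈ s, w i * ((a - x i) ^ 2 - (∑ j ∈ s, w j * x j - x i) ^ 2) =
      (a - ∑ i ∈ s, w i * x i) ^ 2 := by
  have hsym : ∀ b i, (b - x i) ^ 2 = (x i - b) ^ 2 := fun b i => by ring
  simp only [hsym, mul_sub, sum_sub_distrib, sum_mul_sub_sq_eq s w x _ hw, sub_self]
  ring

section Rps

variable {K : ℕ}

def stepCdf (k l : Fin K) : ℝ := if k ≤ l then 1 else 0

noncomputable def rps (G : Fin K → ℝ) (k : Fin K) : ℝ :=
  ((K : ℝ) - 1)⁻¹ * ∑ l, (G l - stepCdf k l) ^ 2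

def cdfIncrement (p : Fin K → ℝ) (k : Fin K) : ℝ :=
  p k - if h : (k : ℕ) = 0 then 0 else p ⟨k - 1, by omega⟩

theorem sum_cdfIncrement_mul_stepCdf (p : Fin K → ℝ) (l : Fin K) :
    ∑ k, cdfIncrement p k * stepCdf k l = p l := by
  obtain ⟨n, hn⟩ := l
  induction n with
  | zero =>
    rw [sum_eq_single ⟨0, hn⟩]
    · simp [cdfIncrement, stepCdf]
    · intro k _ hk
      rw [stepCdf, if_neg (by rw [Fin.le_def]; exact fun h => hk (Fin.ext (by simpa using h))),
        mul_zero]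
    · simp
  | succ n ih =>
    have hstep : ∀ k : Fin K, stepCdf k ⟨n + 1, hn⟩ =
        stepCdf k ⟨n, by omega⟩ + if k = ⟨n + 1, hn⟩ then 1 else 0 := by
      intro k
      simp only [stepCdf, Fin.le_def, Fin.ext_iff]
      split_ifs <;> first | omega | norm_num
    simp only [hstep, mul_add, mul_ite, mul_one, mul_zero, sum_add_distrib, sum_ite_eq',
      mem_univ, if_true, ih]
    simp [cdfIncrement]

theorem cdfIncrement_nonneg {p : Fin K → ℝ} (hp : Monotone p) (hp0 : ∀ l, 0 ≤ p l)
    (k : Fin K) : 0 ≤ cdfIncrement p k := by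
  unfold cdfIncrement
  split_ifs with hk
  · simpa using hp0 k
  · exact sub_nonneg.mpr (hp (Fin.mk_le_mk.mpr (by omega)))

theorem sum_cdfIncrement (hK : 0 < K) (p : Fin K → ℝ) (hlast : p ⟨K - 1, by omega⟩ = 1) :
    ∑ k, cdfIncrement p k = 1 := by
  rw [← hlast, ← sum_cdfIncrement_mul_stepCdf p]
  refine sum_congr rfl fun k _ => ?_
  rw [stepCdf, if_pos (Fin.mk_le_mk.mpr (by omega)), mul_one]

theorem rps_pool_sub_sum_mul_rps {M : ℕ} (F : Fin M → Fin K → ℝ) (w : Fin M → ℝ)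
    (hw1 : ∑ m, w m = 1) (k : Fin K) :
    rps (fun l => ∑ m, w m * F m l) k - ∑ m, w m * rps (F m) k =
      -(((K : ℝ) - 1)⁻¹ * ∑ l, (∑ m, w m * F m l ^ 2 - (∑ m, w m * F m l) ^ 2)) := by
  have hmix : ∑ m, w m * rps (F m) k =
      ((K : ℝ) - 1)⁻¹ * ∑ l, ∑ m, w m * (F m l - stepCdf k l) ^ 2 := by
    simp only [rps, mul_sum]
    rw [sum_comm]
    exact sum_congr rfl fun _ _ => sum_congr rfl fun _ _ => by ring
  rw [hmix, rps]
  simp only [sum_mul_sub_sq_eq _ _ _ _ hw1, sum_add_distrib]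
  ring

theorem sum_mul_rps_sub_rps (lam p G : Fin K → ℝ) (hlam1 : ∑ k, lam k = 1)
    (hlamp : ∀ l, ∑ k, lam k * stepCdf k l = p l) :
    ∑ k, lam k * (rps G k - rps p k) = ((K : ℝ) - 1)⁻¹ * ∑ l, (G l - p l) ^ 2 := by
  calc ∑ k, lam k * (rps G k - rps p k)
      = ((K : ℝ) - 1)⁻¹ * ∑ l, ∑ k, lam k *
          ((G l - stepCdf k l) ^ 2 - (p l - stepCdf k l) ^ 2) := by
        simp only [rps, ← mul_sub, ← sum_sub_distrib, mul_sum]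
        rw [sum_comm]
        exact sum_congr rfl fun _ _ => sum_congr rfl fun _ _ => by ring
    _ = ((K : ℝ) - 1)⁻¹ * ∑ l, (G l - p l) ^ 2 := by
        congr 1
        refine sum_congr rfl fun l _ => ?_
        rw [← hlamp l]
        exact sum_mul_sub_sq_sub_sub_sq _ _ _ _ hlam1

theorem sum_cdfIncrement_mul_rps_sub_sum_mul_rps {M : ℕ} (hK : 0 < K)
    (F : Fin M → Fin K → ℝ) (w : Fin M → ℝ) (hw1 : ∑ m, w m = 1)
    (hlast : ∑ m, w m * F m ⟨K - 1, by omega⟩ = 1) (G : Fin K → ℝ) :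
    ∑ k, cdfIncrement (fun l => ∑ m, w m * F m l) k * (rps G k - ∑ m, w m * rps (F m) k) =
      ((K : ℝ) - 1)⁻¹ * ∑ l, (G l - ∑ m, w m * F m l) ^ 2 +
        (rps (fun l => ∑ m, w m * F m l) ⟨0, hK⟩ - ∑ m, w m * rps (F m) ⟨0, hK⟩) := by
  set pool : Fin K → ℝ := fun l => ∑ m, w m * F m l
  have hlam1 := sum_cdfIncrement hK pool hlast
  have hsplit : ∀ k, rps G k - ∑ m, w m * rps (F m) k = (rps G k - rps pool k) +
      (rps pool ⟨0, hK⟩ - ∑ m, w m * rps (F m) ⟨0, hK⟩) := fun k => by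
    have hconst := rps_pool_sub_sum_mul_rps F w hw1
    rw [hconst ⟨0, hK⟩, ← hconst k]
    ring
  rw [sum_congr rfl fun k _ => by rw [hsplit k, mul_add], sum_add_distrib, ← sum_mul, hlam1,
    one_mul, sum_mul_rps_sub_rps _ pool G hlam1 (sum_cdfIncrement_mul_stepCdf pool)]

end Rps

/-- Linear pooling is minimax optimal for the ranked probability score:
`F̄ = ∑ m, w m • F m` minimizes over candidate CDFs the worst-case (over
categories) excess RPS relative to the weighted average of the members' RPS. -/
theorem linear_pooling_minimax_rps
    (K : ℕ) (hK : 2 ≤ K) (M : ℕ)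
    (F : Fin M → Fin K → ℝ)
    (hF01 : ∀ m l, F m l ∈ Set.Icc (0 : ℝ) 1)
    (hFmono : ∀ m, Monotone (F m))
    (hFlast : ∀ m, F m ⟨K - 1, by omega⟩ = 1)
    (w : Fin M → ℝ) (hw : ∀ m, 0 ≤ w m) (hw1 : ∑ m, w m = 1) :
    let RPS : (Fin K → ℝ) → Fin K → ℝ := fun G k =>
      ((K : ℝ) - 1)⁻¹ * ∑ l, (G l - if k ≤ l then (1 : ℝ) else 0) ^ 2
    ∀ G : Fin K → ℝ, (∀ l, G l ∈ Set.Icc (0 : ℝ) 1) → Monotone G →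
      G ⟨K - 1, by omega⟩ = 1 →
      (Finset.univ.sup' (by simp [Finset.univ_nonempty_iff]; exact Fin.pos_iff_nonempty.mp (by omega))
          (fun k : Fin K => RPS (fun l => ∑ m, w m * F m l) k - ∑ m, w m * RPS (F m) k)) ≤
        (Finset.univ.sup' (by simp [Finset.univ_nonempty_iff]; exact Fin.pos_iff_nonempty.mp (by omega))
          (fun k : Fin K => RPS G k - ∑ m, w m * RPS (F m) k)) := by
  intro RPS G _ _ _
  change univ.sup' _ (fun k => rps (fun l => ∑ m, w m * F m l) k - ∑ m, w m * rps (F m) k) ≤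
    univ.sup' _ (fun k => rps G k - ∑ m, w m * rps (F m) k)
  have hK0 : 0 < K := by omega
  have hpool_mono : Monotone fun l => ∑ m, w m * F m l := fun a b hab =>
    sum_le_sum fun m _ => mul_le_mul_of_nonneg_left (hFmono m hab) (hw m)
  have hpool_nonneg : ∀ l, 0 ≤ ∑ m, w m * F m l := fun l =>
    sum_nonneg fun m _ => mul_nonneg (hw m) (hF01 m l).1
  have hpool_last : ∑ m, w m * F m ⟨K - 1, by omega⟩ = 1 := by simp only [hFlast, mul_one, hw1]
  have hc : (0 : ℝ) ≤ ((K : ℝ) - 1)⁻¹ := inv_nonneg.mpr (by norm_num; omega)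
  calc univ.sup' _ (fun k => rps (fun l => ∑ m, w m * F m l) k - ∑ m, w m * rps (F m) k)
      = rps (fun l => ∑ m, w m * F m l) ⟨0, hK0⟩ - ∑ m, w m * rps (F m) ⟨0, hK0⟩ := by
        simp only [rps_pool_sub_sum_mul_rps F w hw1, sup'_const]
    _ ≤ univ.centerMass (cdfIncrement fun l => ∑ m, w m * F m l)
          (fun k => rps G k - ∑ m, w m * rps (F m) k) := by
        rw [centerMass_eq_of_sum_1 _ _ (sum_cdfIncrement hK0 _ hpool_last)]
        simp only [smul_eq_mul]
        rw [sum_cdfIncrement_mul_rps_sub_sum_mul_rps hK0 F w hw1 hpool_last G]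
        exact le_add_of_nonneg_left (mul_nonneg hc (sum_nonneg fun l _ => sq_nonneg _))
    _ ≤ univ.sup' _ (fun k => rps G k - ∑ m, w m * rps (F m) k) :=
        centerMass_le_sup (fun k _ => cdfIncrement_nonneg hpool_mono hpool_nonneg k)
          (by rw [sum_cdfIncrement hK0 _ hpool_last]; exact one_pos)
end
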